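/- Let u : A ⥤ B be a functor between small categories. The following conditions are equivalent: (a) u is a fibration, i.e. for every arrow p : b ⟶ b' of B and every object a' of A with u a' = b' there exists a hypercartesian arrow c : a ⟶ a' of A with u c = p; (b) u is smooth with respect to the minimal right asphericity structure (the class of small categories having a terminal object); (c) for every pair of composable functors B'' ⥤ B' ⥤ B with pullbacks A' = B' ×_B A and A'' = B'' ×_{B'} A' in Cat, if the functor B'' ⥤ B' has a right adjoint then so does the induced functor A'' ⥤ A'; (d) for every functor [2] ⥤ B (where [2] = {0 → 1 → 2}), forming the pullback A' = [2] ×_B A and then the pullback A'' = [1] ×_{[2]} A' along the inclusion [1] = {0 → 1} ⥤ [2], the induced functor A'' ⥤ A' has a right adjoint. -/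

import Mathlib

/-!
Having a right adjoint means that every comma category `A/b` has a terminal object, so
smoothness for the minimal asphericity structure says that base change along `u` preserves
left adjoints: (b) is (c). Pullbacks in `Cat` are strict fibre products. Base changes of a
fibration are fibrations, and the base change of a left adjoint `t` along a fibration `v` is a
left adjoint: its right adjoint sends `x` to the domain of a cartesian lift at `x` of the counit
of `t` at `v x`. As `[1] ⥤ [2]` is a left adjoint, (c) gives (d).

For (d) ⇒ (a), pull back along `b'' ⟶ b ⟶ b'`. The right adjoint gives, for `a'` over `b'`,
a coreflection of `(2, a')` into the objects over `{0, 1}`. It lies over `1`, and is a lift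
`c` of `b ⟶ b'` which is cartesian and strongly universal for test arrows over `b'' ⟶ b`.
The lifts obtained for different `b'' ⟶ b` are cartesian lifts of the same arrow, hence
isomorphic over `b`, so any one of them is hypercartesian.
-/

open CategoryTheory Limits

namespace Paper

/-- A functor between small categories is aspheric (w.r.t. a class 𝒜 of small
categories) if all its comma categories `A/b` belong to 𝒜. -/
def Aspheric (𝒜 : Set Cat.{0,0}) {A B : Cat.{0,0}} (u : A ⥤ B) : Prop :=
  ∀ b : B, Cat.of (CostructuredArrow u b) ∈ 𝒜

/-- `u : A ⥤ B` is smooth (w.r.t. 𝒜) if, for all composable `t : B'' ⟶ B'`, `s : B' ⟶ B`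
with pullbacks `A' = B' ×_B A` and `A'' = B'' ×_{B'} A'`, asphericity of `t` implies
asphericity of the induced functor `A'' ⥤ A'`. -/
def Smooth (𝒜 : Set Cat.{0,0}) {A B : Cat.{0,0}} (u : A ⟶ B) : Prop :=
  ∀ (B' B'' : Cat.{0,0}) (s : B' ⟶ B) (t : B'' ⟶ B'),
    Aspheric 𝒜 t.toFunctor → Aspheric 𝒜 (pullback.snd t (pullback.fst s u)).toFunctor

/-- An arrow `c : a ⟶ a'` is hypercartesian with respect to `u` if every
`f : a'' ⟶ a'` together with a factorization `u f = h ≫ u c` in `B` factors uniquely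
through `c` over `h`. -/
def IsHypercartesian {A B : Cat.{0,0}} (u : A ⥤ B) {a a' : A} (c : a ⟶ a') : Prop :=
  ∀ (a'' : A) (f : a'' ⟶ a') (h : u.obj a'' ⟶ u.obj a),
    u.map f = h ≫ u.map c → ∃! g : a'' ⟶ a, u.map g = h ∧ f = g ≫ c

/-- `u` is a fibration if every arrow of `B` admits a hypercartesian lift with any
prescribed target. -/
def IsFibration {A B : Cat.{0,0}} (u : A ⥤ B) : Prop :=
  ∀ ⦃b b' : B⦄ (p : b ⟶ b') (a' : A) (ha' : u.obj a' = b'),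
    ∃ (a : A) (c : a ⟶ a') (ha : u.obj a = b),
      u.map c = eqToHom ha ≫ p ≫ eqToHom ha'.symm ∧ IsHypercartesian u c

/-- The inclusion `[1] ⥤ [2]` of `{0 → 1}`, where `[n]` is the linearly ordered
category `Fin (n+1)`. -/
def incl12 : Cat.of (Fin 2) ⟶ Cat.of (Fin 3) :=
  ((Fin.strictMono_castLE (by omega)).monotone.functor : Fin 2 ⥤ Fin 3).toCatHom

universe v₁ v₂ v₃ u₁ u₂ u₃

lemma isLeftAdjoint_iff_forall_existsUnique {C D : Type*} [Category C] [Category D] (T : C ⥤ D) :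
    T.IsLeftAdjoint ↔ ∀ X : D, ∃ (Y₀ : C) (ε : T.obj Y₀ ⟶ X),
      ∀ (Y : C) (m : T.obj Y ⟶ X), ∃! γ : Y ⟶ Y₀, T.map γ ≫ ε = m := by
  refine ⟨fun _ X => ?_, fun h => ?_⟩
  · let adj := Adjunction.ofIsLeftAdjoint T
    refine ⟨T.rightAdjoint.obj X, adj.counit.app X, fun Y m => ⟨adj.homEquiv _ _ m, ?_, ?_⟩⟩
    · simp only [← adj.homEquiv_counit, Equiv.symm_apply_apply]
    · intro γ hγ
      rw [← hγ, ← adj.homEquiv_counit, Equiv.apply_symm_apply]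
  · rw [isLeftAdjoint_iff_hasTerminal_costructuredArrow]
    intro X
    obtain ⟨Y₀, ε, hε⟩ := h X
    choose γ hγ huniq using hε
    exact (IsTerminal.ofUniqueHom (Y := CostructuredArrow.mk ε)
      (fun Z => CostructuredArrow.homMk (γ Z.left Z.hom) (hγ _ _))
      fun Z m => CostructuredArrow.hom_ext _ _ (huniq _ _ _ (CostructuredArrow.w m))).hasTerminal

section Cartesian

variable {𝒮 𝒳 : Type*} [Category 𝒮] [Category 𝒳] (p : 𝒳 ⥤ 𝒮)

lemma IsHomLift.base_eq {R S : 𝒮} {a b : 𝒳} {f f' : R ⟶ S} (φ : a ⟶ b) [p.IsHomLift f φ]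
    [p.IsHomLift f' φ] : f = f' := by
  rw [IsHomLift.fac p f φ, IsHomLift.fac p f' φ]

lemma isHomLift_of_thin [Quiver.IsThin 𝒮] {R S : 𝒮} {a b : 𝒳} (f : R ⟶ S) (φ : a ⟶ b)
    (ha : p.obj a = R) (hb : p.obj b = S) : p.IsHomLift f φ :=
  IsHomLift.of_fac _ _ _ ha hb (Subsingleton.elim _ _)

def IsStronglyCartesianAlong {R' R S : 𝒮} (g : R' ⟶ R) (f : R ⟶ S) {a b : 𝒳} (φ : a ⟶ b) :
    Prop :=
  ∀ ⦃a' : 𝒳⦄ (φ' : a' ⟶ b), p.IsHomLift (g ≫ f) φ' →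
    ∃! χ : a' ⟶ a, p.IsHomLift g χ ∧ χ ≫ φ = φ'

variable {p} {R S : 𝒮} {f : R ⟶ S} {a b : 𝒳} {φ : a ⟶ b}

lemma isStronglyCartesian_of_forall_isStronglyCartesianAlong [p.IsHomLift f φ]
    (h : ∀ ⦃R'⦄ (g : R' ⟶ R), IsStronglyCartesianAlong p g f φ) : p.IsStronglyCartesian f φ :=
  ⟨fun g φ' _ => h g φ' inferInstance⟩

lemma isCartesian_of_isStronglyCartesianAlong_id [p.IsHomLift f φ]
    (h : IsStronglyCartesianAlong p (𝟙 R) f φ) : p.IsCartesian f φ :=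
  ⟨fun φ' _ => h φ' inferInstance⟩

lemma IsStronglyCartesianAlong.of_isCartesian {R' : 𝒮} {g : R' ⟶ R} {a₁ : 𝒳} {φ₁ : a₁ ⟶ b}
    [p.IsCartesian f φ] [p.IsCartesian f φ₁] (h : IsStronglyCartesianAlong p g f φ₁) :
    IsStronglyCartesianAlong p g f φ := by
  let Φ := Functor.IsCartesian.domainUniqueUpToIso p f φ φ₁
  intro a' φ' hφ'
  obtain ⟨χ, ⟨hχ, rfl⟩, huniq⟩ := h φ' hφ'
  refine ⟨χ ≫ Φ.hom, ⟨inferInstance, by simp [Φ]⟩, fun χ' ⟨hχ', hcomp⟩ => ?_⟩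
  rw [← Iso.comp_inv_eq]
  exact huniq _ ⟨inferInstance, by simp [Φ, hcomp]⟩

end Cartesian

@[ext]
structure StrictPullback {X : Type u₁} {Y : Type u₂} {Z : Type u₃} [Category.{v₁} X]
    [Category.{v₂} Y] [Category.{v₃} Z] (f : X ⥤ Z) (g : Y ⥤ Z) where
  left : X
  right : Y
  w : g.obj right = f.obj left

namespace StrictPullback

section

variable {X : Type u₁} {Y : Type u₂} {Z : Type u₃} [Category.{v₁} X] [Category.{v₂} Y]
  [Category.{v₃} Z] {f : X ⥤ Z} {g : Y ⥤ Z}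

/-- `isHomLift` says that `f.map left = g.map right` up to the identifications `w`. -/
@[ext]
structure Hom (P Q : StrictPullback f g) where
  left : P.left ⟶ Q.left
  right : P.right ⟶ Q.right
  isHomLift : g.IsHomLift (f.map left) right

attribute [instance] Hom.isHomLift

instance : Category (StrictPullback f g) where
  Hom := Hom
  id P := ⟨𝟙 _, 𝟙 _, by rw [f.map_id]; exact IsHomLift.id P.w⟩
  comp α β := ⟨α.left ≫ β.left, α.right ≫ β.right, by rw [f.map_comp]; infer_instance⟩

@[ext]
lemma hom_ext {P Q : StrictPullback f g} {α β : P ⟶ Q} (hl : α.left = β.left)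
    (hr : α.right = β.right) : α = β :=
  Hom.ext hl hr

@[simp] lemma comp_left {P Q R : StrictPullback f g} (α : P ⟶ Q) (β : Q ⟶ R) :
    (α ≫ β).left = α.left ≫ β.left := rfl
@[simp] lemma comp_right {P Q R : StrictPullback f g} (α : P ⟶ Q) (β : Q ⟶ R) :
    (α ≫ β).right = α.right ≫ β.right := rfl

@[simp] lemma eqToHom_left {P Q : StrictPullback f g} (h : P = Q) :
    Hom.left (eqToHom h) = eqToHom (congrArg StrictPullback.left h) := by
  subst h; rfl

@[simp] lemma eqToHom_right {P Q : StrictPullback f g} (h : P = Q) :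
    Hom.right (eqToHom h) = eqToHom (congrArg StrictPullback.right h) := by
  subst h; rfl

lemma Hom.isHomLift_of_thin [Quiver.IsThin X] {P Q : StrictPullback f g} (α : P ⟶ Q)
    (k : P.left ⟶ Q.left) : g.IsHomLift (f.map k) α.right :=
  Subsingleton.elim α.left k ▸ α.isHomLift

variable (f g)

def fst : StrictPullback f g ⥤ X where
  obj P := P.left
  map α := α.left

def snd : StrictPullback f g ⥤ Y where
  obj P := P.right
  map α := α.right

lemma fst_comp_eq_snd_comp : fst f g ⋙ f = snd f g ⋙ g :=
  CategoryTheory.Functor.ext (fun P => P.w.symm) fun _ _ α =>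
    IsHomLift.fac g (f.map α.left) α.right

variable {f g}

lemma isHomLift_fst_iff {P Q : StrictPullback f g} (k : P.left ⟶ Q.left) (χ : P ⟶ Q) :
    (fst f g).IsHomLift k χ ↔ χ.left = k :=
  ⟨fun hk => (@IsHomLift.eq_of_isHomLift _ _ _ _ (fst f g) _ _ k χ hk).symm,
    fun h => h ▸ IsHomLift.map (fst f g) χ⟩

def lift {W : Type*} [Category W] (F : W ⥤ X) (G : W ⥤ Y) (h : F ⋙ f = G ⋙ g) :
    W ⥤ StrictPullback f g where
  obj w := ⟨F.obj w, G.obj w, (Functor.congr_obj h w).symm⟩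
  map {w w'} m := ⟨F.map m, G.map m, by
    refine IsHomLift.of_fac _ _ _ (Functor.congr_obj h w).symm (Functor.congr_obj h w').symm ?_
    simpa using Functor.congr_hom h m⟩

lemma functor_ext {W : Type*} [Category W] {L L' : W ⥤ StrictPullback f g}
    (h₁ : L ⋙ fst f g = L' ⋙ fst f g) (h₂ : L ⋙ snd f g = L' ⋙ snd f g) : L = L' := by
  refine CategoryTheory.Functor.ext
    (fun w => StrictPullback.ext (Functor.congr_obj h₁ w) (Functor.congr_obj h₂ w)) fun w w' m => ?_
  ext
  · simp only [comp_left, eqToHom_left]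
    exact Functor.congr_hom h₁ m
  · simp only [comp_right, eqToHom_right]
    exact Functor.congr_hom h₂ m

variable (f g)

lemma isFibered_fst [g.IsFibered] : (fst f g).IsFibered := by
  refine Functor.IsFibered.of_exists_isStronglyCartesian fun P R (h : R ⟶ P.left) => ?_
  obtain ⟨a, c, hc⟩ := IsPreFibered.exists_isCartesian g P.w (f.map h)
  let ψ : (⟨R, a, IsHomLift.domain_eq g (f.map h) c⟩ : StrictPullback f g) ⟶ P :=
    ⟨h, c, inferInstance⟩
  refine ⟨_, ψ,
    { toIsHomLift := IsHomLift.map (fst f g) ψ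
      universal_property' := fun {Q} k φ' hφ' => ?_ }⟩
  have hl : φ'.left = k ≫ h := (isHomLift_fst_iff _ _).mp hφ'
  have : g.IsHomLift (f.map k ≫ f.map h) φ'.right := by
    rw [← f.map_comp, ← hl]; exact φ'.isHomLift
  obtain ⟨χ, ⟨hχ, hχc⟩, huniq⟩ :=
    Functor.IsStronglyCartesian.universal_property g (f.map h) c (f.map k) _ rfl φ'.right
  refine ⟨⟨k, χ, hχ⟩, ⟨(isHomLift_fst_iff _ _).mpr rfl, hom_ext hl.symm hχc⟩,
    fun χ' ⟨hχ', hcomp⟩ => ?_⟩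
  have hk : χ'.left = k := (isHomLift_fst_iff _ _).mp hχ'
  refine hom_ext hk (huniq _ ⟨?_, congrArg Hom.right hcomp⟩)
  rw [← hk]
  exact χ'.isHomLift

lemma isLeftAdjoint_snd [g.IsFibered] [f.IsLeftAdjoint] : (snd f g).IsLeftAdjoint := by
  let adj := Adjunction.ofIsLeftAdjoint f
  rw [isLeftAdjoint_iff_forall_existsUnique]
  intro a
  obtain ⟨a₀, c, hc⟩ := IsPreFibered.exists_isCartesian g rfl (adj.counit.app (g.obj a))
  refine ⟨⟨f.rightAdjoint.obj (g.obj a), a₀, IsHomLift.domain_eq g (adj.counit.app _) c⟩, c,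
    fun P (m : P.right ⟶ a) => ?_⟩
  let m' : f.obj P.left ⟶ g.obj a := eqToHom P.w.symm ≫ g.map m
  have : g.IsHomLift m' m := by dsimp only [m']; infer_instance
  let γ := adj.homEquiv _ _ m'
  have hγ : m' = f.map γ ≫ adj.counit.app _ := by simp [γ, ← adj.homEquiv_counit]
  obtain ⟨χ, ⟨hχ, hχc⟩, huniq⟩ :=
    Functor.IsStronglyCartesian.universal_property g _ c (f.map γ) m' hγ m
  refine ⟨⟨γ, χ, hχ⟩, hχc, fun γ' hγ' => ?_⟩
  have hl : γ'.left = γ := by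
    apply (adj.homEquiv _ _).symm.injective
    rw [adj.homEquiv_counit, adj.homEquiv_counit, ← hγ]
    have : g.IsHomLift m' (γ'.right ≫ c) := by rw [show γ'.right ≫ c = m from hγ']; infer_instance
    exact IsHomLift.base_eq g (γ'.right ≫ c)
  refine hom_ext hl (huniq _ ⟨?_, hγ'⟩)
  rw [← hl]
  infer_instance

end

lemma isPullback {X Y Z : Cat.{v₁, u₁}} (f : X ⟶ Z) (g : Y ⟶ Z) :
    IsPullback (P := Cat.of (StrictPullback f.toFunctor g.toFunctor))
      (Cat.Hom.ofFunctor (fst _ _)) (Cat.Hom.ofFunctor (snd _ _)) f g :=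
  IsPullback.of_isLimit' ⟨Cat.Hom.ext (fst_comp_eq_snd_comp _ _)⟩ <|
    PullbackCone.IsLimit.mk _
      (fun s => Cat.Hom.ofFunctor
        (lift s.fst.toFunctor s.snd.toFunctor (congrArg Cat.Hom.toFunctor s.condition)))
      (fun _ => rfl) (fun _ => rfl)
      (fun _ _ h₁ h₂ => Cat.Hom.ext
        (functor_ext (congrArg Cat.Hom.toFunctor h₁) (congrArg Cat.Hom.toFunctor h₂)))

lemma isLeftAdjoint_pullback_snd_iff {A B B' B'' : Cat.{v₁, v₁}} (u : A ⟶ B) (s : B' ⟶ B)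
    (t : B'' ⟶ B') :
    (pullback.snd t (pullback.fst s u)).toFunctor.IsLeftAdjoint ↔
      (snd t.toFunctor (fst s.toFunctor u.toFunctor)).IsLeftAdjoint := by
  let e := (IsPullback.of_hasPullback s u).isoIsPullback _ _ (isPullback s u)
  have h : IsPullback (Cat.Hom.ofFunctor (fst t.toFunctor (fst s.toFunctor u.toFunctor)))
      (Cat.Hom.ofFunctor (snd t.toFunctor (fst s.toFunctor u.toFunctor)) ≫ e.inv) t
      (pullback.fst s u) :=
    (isPullback t (Cat.Hom.ofFunctor (fst s.toFunctor u.toFunctor))).of_iso (Iso.refl _)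
      (Iso.refl _) e.symm (Iso.refl _) rfl rfl rfl (by
        rw [Iso.refl_hom, Category.comp_id, Iso.symm_hom]
        exact e.eq_inv_comp.mpr
          ((IsPullback.of_hasPullback s u).isoIsPullback_hom_fst _ _ (isPullback s u)))
  let e' := (IsPullback.of_hasPullback _ _).isoIsPullback _ _ h
  rw [← (IsPullback.of_hasPullback _ _).isoIsPullback_hom_snd _ _ h, Cat.Hom.comp_toFunctor,
    Cat.Hom.comp_toFunctor]
  exact (@Functor.isLeftAdjoint_comp_iff_right _ _ _ _ _ _ _ _
    (Cat.equivOfIso e').isEquivalence_functor).trans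
    (@Functor.isLeftAdjoint_comp_iff_left _ _ _ _ _ _ _ _
      (Cat.equivOfIso e.symm).isEquivalence_functor)

end StrictPullback

open StrictPullback ComposableArrows

lemma isHypercartesian_iff {A B : Cat.{0,0}} (u : A ⥤ B) {a a' : A} (c : a ⟶ a') :
    IsHypercartesian u c ↔ u.IsStronglyCartesian (u.map c) c := by
  refine ⟨fun h => ⟨fun {a''} g f _ => ?_⟩, fun h a'' f g hf => ?_⟩
  · obtain ⟨χ, ⟨hχ, hχc⟩, huniq⟩ := h a'' f g (IsHomLift.eq_of_isHomLift u (g ≫ u.map c) f).symm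
    refine ⟨χ, ⟨hχ ▸ IsHomLift.map u χ, hχc.symm⟩, fun χ' ⟨_, hχ'c⟩ => ?_⟩
    exact huniq χ' ⟨(IsHomLift.eq_of_isHomLift u g χ').symm, hχ'c.symm⟩
  · have : u.IsHomLift (g ≫ u.map c) f := hf ▸ IsHomLift.map u f
    obtain ⟨χ, ⟨_, hχc⟩, huniq⟩ := h.universal_property' g f
    refine ⟨χ, ⟨(IsHomLift.eq_of_isHomLift u g χ).symm, hχc.symm⟩, fun χ' ⟨hχ', hχ'c⟩ => ?_⟩
    exact huniq χ' ⟨hχ' ▸ IsHomLift.map u χ', hχ'c.symm⟩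

lemma isFibration_iff_isFibered {A B : Cat.{0,0}} (u : A ⥤ B) : IsFibration u ↔ u.IsFibered := by
  refine ⟨fun h => Functor.IsFibered.of_exists_isStronglyCartesian fun a' b p => ?_,
    fun _ b b' p a' ha' => ?_⟩
  · obtain ⟨a, c, rfl, hc, hcart⟩ := h p a' rfl
    obtain rfl : u.map c = p := by simpa using hc
    exact ⟨a, c, (isHypercartesian_iff u c).mp hcart⟩
  · subst ha'
    obtain ⟨a, c, hc⟩ := IsPreFibered.exists_isCartesian u rfl p
    obtain rfl := IsHomLift.domain_eq u p c
    obtain rfl := IsHomLift.eq_of_isHomLift u p c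
    exact ⟨a, c, rfl, by simp, (isHypercartesian_iff u c).mpr inferInstance⟩

lemma aspheric_hasTerminal_iff {A B : Cat.{0,0}} (u : A ⥤ B) :
    Aspheric {C : Cat.{0,0} | HasTerminal C} u ↔ u.IsLeftAdjoint :=
  isLeftAdjoint_iff_hasTerminal_costructuredArrow.symm

lemma smooth_hasTerminal_iff {A B : Cat.{0,0}} (u : A ⟶ B) :
    Smooth {C : Cat.{0,0} | HasTerminal C} u ↔
      ∀ (B' B'' : Cat.{0,0}) (s : B' ⟶ B) (t : B'' ⟶ B'), t.toFunctor.IsLeftAdjoint →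
        (pullback.snd t (pullback.fst s u)).toFunctor.IsLeftAdjoint := by
  simp only [Smooth, aspheric_hasTerminal_iff]

lemma isLeftAdjoint_incl12 : incl12.toFunctor.IsLeftAdjoint :=
  have gc : GaloisConnection (Fin.castLE (by omega) : Fin 2 → Fin 3)
      (fun k => ⟨min k 1, by omega⟩) := fun i k => by
    simp only [Fin.le_def, Fin.val_castLE]
    omega
  ⟨_, ⟨gc.adjunction⟩⟩

/-- `incl12.toFunctor` typed as a functor between the order categories, so that instances on
`StrictPullback incl12Functor _` are found. -/
abbrev incl12Functor : Fin 2 ⥤ Fin 3 := incl12.toFunctor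

section Coreflection

variable {A : Type u₁} {B : Type u₂} [Category.{v₁} A] [Category.{v₂} B] {u : A ⥤ B}
  {φ : Fin 3 ⥤ B}

variable (u) in
def IsCoreflectionLEOne {P₀ X : StrictPullback φ u} (ε : P₀ ⟶ X) : Prop :=
  P₀.left ≤ 1 ∧ ∀ P : StrictPullback φ u, P.left ≤ 1 → ∀ m : P ⟶ X, ∃! ψ : P ⟶ P₀, ψ ≫ ε = m

lemma exists_isCoreflectionLEOne (H : (snd incl12Functor (fst φ u)).IsLeftAdjoint)
    (X : StrictPullback φ u) :
    ∃ (P₀ : StrictPullback φ u) (ε : P₀ ⟶ X), IsCoreflectionLEOne u ε := by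
  obtain ⟨Y₀, ε, hε⟩ := (isLeftAdjoint_iff_forall_existsUnique _).mp H X
  have hY₀ : Y₀.right.left = ⟨Y₀.left, by omega⟩ := Y₀.w
  refine ⟨Y₀.right, ε, ?_, fun P hP m => ?_⟩
  · rw [hY₀, Fin.le_def]
    simp only [Fin.val_one]
    omega
  · obtain ⟨γ, hγ, huniq⟩ := hε ⟨⟨P.left, by omega⟩, P, rfl⟩ m
    refine ⟨γ.right, hγ, fun ψ hψ => ?_⟩
    have hle : (⟨P.left, by omega⟩ : Fin 2) ≤ Y₀.left := by
      have := leOfHom ψ.left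
      rw [hY₀, Fin.le_def] at this
      exact this
    exact congrArg Hom.right (huniq ⟨homOfLE hle, ψ, isHomLift_of_thin _ _ _ rfl Y₀.w⟩ hψ)

lemma IsCoreflectionLEOne.left_eq_one {P₀ X : StrictPullback φ u} {ε : P₀ ⟶ X}
    (hε : IsCoreflectionLEOne u ε) {Q : StrictPullback φ u} (hQ : Q.left = 1) (m : Q ⟶ X) :
    P₀.left = 1 := by
  obtain ⟨ψ, -, -⟩ := hε.2 Q hQ.le m
  exact le_antisymm hε.1 (hQ ▸ leOfHom ψ.left)

lemma IsCoreflectionLEOne.isStronglyCartesianAlong {a : A} {w} {X : StrictPullback φ u}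
    {ε : (⟨1, a, w⟩ : StrictPullback φ u) ⟶ X} (hε : IsCoreflectionLEOne u ε) {i : Fin 3}
    (hi : i ≤ 1) (h2 : (1 : Fin 3) ≤ X.left) :
    IsStronglyCartesianAlong u (φ.map (homOfLE hi)) (φ.map (homOfLE h2)) ε.right := by
  intro a₁ φ' hφ'
  rw [← φ.map_comp] at hφ'
  obtain ⟨ψ, hψ, huniq⟩ :=
    hε.2 ⟨i, a₁, IsHomLift.domain_eq u (φ.map (homOfLE hi ≫ homOfLE h2)) φ'⟩ hi ⟨_ ≫ _, φ', hφ'⟩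
  refine ⟨ψ.right, ⟨ψ.isHomLift_of_thin _, congrArg Hom.right hψ⟩, fun χ ⟨hχ, hχc⟩ => ?_⟩
  exact congrArg Hom.right (huniq ⟨homOfLE hi, χ, hχ⟩ (hom_ext (Subsingleton.elim _ _) hχc))

end Coreflection

section

variable {A : Type u₁} {B : Type u₂} [Category.{v₁} A] [Category.{v₂} B] {u : A ⥤ B}

lemma exists_isHomLift_of_forall_isLeftAdjoint
    (H : ∀ φ : Fin 3 ⥤ B, (snd incl12Functor (fst φ u)).IsLeftAdjoint)
    {a' : A} {b : B} (p : b ⟶ u.obj a') :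
    ∃ (a : A) (c : a ⟶ a'), u.IsHomLift p c := by
  obtain ⟨⟨x, a, w⟩, ε, hx, -⟩ := exists_isCoreflectionLEOne (H (mk₂ (𝟙 b) p)) ⟨2, a', rfl⟩
  refine ⟨a, ε.right, ?_⟩
  change x ≤ 1 at hx
  obtain rfl | rfl : x = 0 ∨ x = 1 := by omega
  · have : u.IsHomLift (𝟙 b ≫ p) ε.right :=
      ε.isHomLift_of_thin (homOfLE (show (0 : Fin 3) ≤ 2 by decide))
    rwa [Category.id_comp] at this
  · exact ε.isHomLift_of_thin (homOfLE (show (1 : Fin 3) ≤ 2 by decide))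

lemma exists_isCartesian_of_forall_isLeftAdjoint
    (H : ∀ φ : Fin 3 ⥤ B, (snd incl12Functor (fst φ u)).IsLeftAdjoint)
    {a₀ a' : A} {b'' b : B} (g : b'' ⟶ b) (p : b ⟶ u.obj a') (c₀ : a₀ ⟶ a') [u.IsHomLift p c₀] :
    ∃ (a : A) (c : a ⟶ a'), u.IsCartesian p c ∧ IsStronglyCartesianAlong u g p c := by
  obtain ⟨P₀, ε, hε⟩ := exists_isCoreflectionLEOne (H (mk₂ g p)) ⟨2, a', rfl⟩
  have h1 := hε.left_eq_one (Q := ⟨1, a₀, (IsHomLift.domain_eq u p c₀ :)⟩) rfl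
    ⟨homOfLE (show (1 : Fin 3) ≤ 2 by decide), c₀, ‹u.IsHomLift p c₀›⟩
  obtain ⟨x, a, w⟩ := P₀
  obtain rfl : x = 1 := h1
  have : u.IsHomLift p ε.right := ε.isHomLift_of_thin (homOfLE (show (1 : Fin 3) ≤ 2 by decide))
  have hid := hε.isStronglyCartesianAlong (le_refl 1) (show (1 : Fin 3) ≤ 2 by decide)
  rw [show homOfLE (le_refl (1 : Fin 3)) = 𝟙 1 from Subsingleton.elim _ _,
    CategoryTheory.Functor.map_id] at hid
  exact ⟨a, ε.right, isCartesian_of_isStronglyCartesianAlong_id hid,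
    hε.isStronglyCartesianAlong (show (0 : Fin 3) ≤ 1 by decide) (show (1 : Fin 3) ≤ 2 by decide)⟩

lemma isFibered_of_forall_isLeftAdjoint
    (H : ∀ φ : Fin 3 ⥤ B, (snd incl12Functor (fst φ u)).IsLeftAdjoint) : u.IsFibered := by
  refine Functor.IsFibered.of_exists_isStronglyCartesian fun a' b p => ?_
  obtain ⟨a₀, c₀, hc₀⟩ := exists_isHomLift_of_forall_isLeftAdjoint H p
  obtain ⟨a, c, hc, -⟩ := exists_isCartesian_of_forall_isLeftAdjoint H (𝟙 b) p c₀
  refine ⟨a, c, isStronglyCartesian_of_forall_isStronglyCartesianAlong fun _ g => ?_⟩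
  obtain ⟨a₁, c₁, hc₁, hg⟩ := exists_isCartesian_of_forall_isLeftAdjoint H g p c₀
  exact hg.of_isCartesian

end

/-- Characterizations of fibrations: (a ↔ b) fibrations are exactly the functors which
are smooth with respect to the minimal right asphericity structure; (a ↔ c) pullbacks
of `u` preserve the property of having a right adjoint; (a ↔ d) it suffices to test
against the inclusion `[1] ⥤ [2]`. -/
theorem isFibration_characterizations {A B : Cat.{0,0}} (u : A ⟶ B) :
    (IsFibration u.toFunctor ↔ Smooth {C : Cat.{0,0} | HasTerminal C} u) ∧
    (IsFibration u.toFunctor ↔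
      ∀ (B' B'' : Cat.{0,0}) (s : B' ⟶ B) (t : B'' ⟶ B'),
        Functor.IsLeftAdjoint t.toFunctor →
          Functor.IsLeftAdjoint (pullback.snd t (pullback.fst s u)).toFunctor) ∧
    (IsFibration u.toFunctor ↔
      ∀ φ : Cat.of (Fin 3) ⟶ B,
        Functor.IsLeftAdjoint (pullback.snd incl12 (pullback.fst φ u)).toFunctor) := by
  have a_to_c : IsFibration u.toFunctor → ∀ (B' B'' : Cat.{0,0}) (s : B' ⟶ B) (t : B'' ⟶ B'),
      t.toFunctor.IsLeftAdjoint → (pullback.snd t (pullback.fst s u)).toFunctor.IsLeftAdjoint := by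
    intro hu B' B'' s t _
    have := (isFibration_iff_isFibered _).mp hu
    have := isFibered_fst s.toFunctor u.toFunctor
    exact (isLeftAdjoint_pullback_snd_iff u s t).mpr (isLeftAdjoint_snd _ _)
  have c_to_d : (∀ (B' B'' : Cat.{0,0}) (s : B' ⟶ B) (t : B'' ⟶ B'),
      t.toFunctor.IsLeftAdjoint → (pullback.snd t (pullback.fst s u)).toFunctor.IsLeftAdjoint) →
      ∀ φ : Cat.of (Fin 3) ⟶ B, (pullback.snd incl12 (pullback.fst φ u)).toFunctor.IsLeftAdjoint :=
    fun h φ => h _ _ φ incl12 isLeftAdjoint_incl12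
  have d_to_a : (∀ φ : Cat.of (Fin 3) ⟶ B,
      (pullback.snd incl12 (pullback.fst φ u)).toFunctor.IsLeftAdjoint) →
      IsFibration u.toFunctor := fun h =>
    (isFibration_iff_isFibered _).mpr <| isFibered_of_forall_isLeftAdjoint fun φ =>
      (isLeftAdjoint_pullback_snd_iff u (Cat.Hom.ofFunctor φ) incl12).mp (h _)
  rw [smooth_hasTerminal_iff]
  exact ⟨⟨a_to_c, d_to_a ∘ c_to_d⟩, ⟨a_to_c, d_to_a ∘ c_to_d⟩, ⟨c_to_d ∘ a_to_c, d_to_a⟩⟩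

end Paper
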